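/- arXiv:2504.01966 — 2 statements merged into one kernel-verified Lean document; each statement's English description precedes it below -/
import Mathlib

section
/- Leibniz rule for the F^γ-derivative: if k, g : F → ℝ are both F^γ-differentiable at z ∈ F and F-continuous at z, then their product is F^γ-differentiable at z with D_F^γ(kg)(z) = (D_F^γ k)(z) g(z) + k(z)(D_F^γ g)(z), provided z is an accumulation point of F and S_F^γ is injective near z on F. -/
/-- `ℓ` is the `F`-limit of `k` at `z`. -/
def IsFLim (F : Set ℝ) (k : ℝ → ℝ) (z ℓ : ℝ) : Prop :=
  ∀ ε : ℝ, 0 < ε → ∃ δ : ℝ, 0 < δ ∧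
    ∀ y ∈ F, 0 < |y - z| → |y - z| < δ → |k y - ℓ| < ε

/-- `z` is an accumulation point of `F`. -/
def IsAccPt (F : Set ℝ) (z : ℝ) : Prop :=
  ∀ δ : ℝ, 0 < δ → ∃ y ∈ F, 0 < |y - z| ∧ |y - z| < δ

/-- `k` has `F^γ`-derivative `L` at `z`, relative to the staircase function `S = S_F^γ`:
the `F`-limit of the difference quotient `(k y − k z)/(S y − S z)` at `z` is `L`. -/
def HasFDeriv (F : Set ℝ) (S : ℝ → ℝ) (k : ℝ → ℝ) (z L : ℝ) : Prop :=
  IsFLim F (fun y => (k y - k z) / (S y - S z)) z L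

lemma isFLim_add {F : Set ℝ} {f g : ℝ → ℝ} {z a b : ℝ}
    (hf : IsFLim F f z a) (hg : IsFLim F g z b) :
    IsFLim F (fun y => f y + g y) z (a + b) := by
  intro ε hε
  obtain ⟨δ1, hδ1, h1⟩ := hf (ε / 2) (by linarith)
  obtain ⟨δ2, hδ2, h2⟩ := hg (ε / 2) (by linarith)
  refine ⟨min δ1 δ2, lt_min hδ1 hδ2, ?_⟩
  intro y hy hy1 hy2
  have e1 := h1 y hy hy1 (lt_of_lt_of_le hy2 (min_le_left _ _))
  have e2 := h2 y hy hy1 (lt_of_lt_of_le hy2 (min_le_right _ _))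
  calc |f y + g y - (a + b)| = |(f y - a) + (g y - b)| := by ring_nf
    _ ≤ |f y - a| + |g y - b| := abs_add_le _ _
    _ < ε := by linarith

lemma isFLim_mul {F : Set ℝ} {f g : ℝ → ℝ} {z a b : ℝ}
    (hf : IsFLim F f z a) (hg : IsFLim F g z b) :
    IsFLim F (fun y => f y * g y) z (a * b) := by
  intro ε hε
  have hM : 0 < |a| + 1 := by positivity
  have hε1 : 0 < ε / (2 * (|b| + 1)) := by positivity
  have hε2 : 0 < ε / (2 * (|a| + 1)) := by positivity
  obtain ⟨δ0, hδ0, h0⟩ := hf 1 one_pos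
  obtain ⟨δ1, hδ1, h1⟩ := hf (ε / (2 * (|b| + 1))) hε1
  obtain ⟨δ2, hδ2, h2⟩ := hg (ε / (2 * (|a| + 1))) hε2
  refine ⟨min δ0 (min δ1 δ2), lt_min hδ0 (lt_min hδ1 hδ2), ?_⟩
  intro y hy hy1 hy2
  have e0 := h0 y hy hy1 (lt_of_lt_of_le hy2 (min_le_left _ _))
  have e1 := h1 y hy hy1 (lt_of_lt_of_le hy2
    (le_trans (min_le_right _ _) (min_le_left _ _)))
  have e2 := h2 y hy hy1 (lt_of_lt_of_le hy2
    (le_trans (min_le_right _ _) (min_le_right _ _)))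
  have hfb : |f y| < |a| + 1 := by
    calc |f y| = |(f y - a) + a| := by ring_nf
      _ ≤ |f y - a| + |a| := abs_add_le _ _
      _ < |a| + 1 := by linarith
  have key : |f y * g y - a * b| ≤ |f y| * |g y - b| + |b| * |f y - a| := by
    calc |f y * g y - a * b| = |f y * (g y - b) + b * (f y - a)| := by ring_nf
      _ ≤ |f y * (g y - b)| + |b * (f y - a)| := abs_add_le _ _
      _ = |f y| * |g y - b| + |b| * |f y - a| := by rw [abs_mul, abs_mul]
  have t1 : |f y| * |g y - b| < (|a| + 1) * (ε / (2 * (|a| + 1))) := by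
    apply mul_lt_mul' (le_of_lt hfb) e2 (abs_nonneg _) hM
  have t2 : |b| * |f y - a| ≤ (|b| + 1) * |f y - a| := by
    apply mul_le_mul_of_nonneg_right (by linarith) (abs_nonneg _)
  have t3 : (|b| + 1) * |f y - a| < (|b| + 1) * (ε / (2 * (|b| + 1))) := by
    apply mul_lt_mul_of_pos_left e1 (by positivity)
  have h4 : (|a| + 1) * (ε / (2 * (|a| + 1))) = ε / 2 := by
    field_simp
  have h5 : (|b| + 1) * (ε / (2 * (|b| + 1))) = ε / 2 := by
    field_simp
  calc |f y * g y - a * b| ≤ |f y| * |g y - b| + |b| * |f y - a| := key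
    _ < ε / 2 + ε / 2 := by linarith
    _ = ε := by ring

lemma isFLim_congr {F : Set ℝ} {f g : ℝ → ℝ} {z a : ℝ}
    (h : ∃ δ : ℝ, 0 < δ ∧ ∀ y ∈ F, 0 < |y - z| → |y - z| < δ → f y = g y)
    (hf : IsFLim F f z a) : IsFLim F g z a := by
  intro ε hε
  obtain ⟨δ0, hδ0, h0⟩ := h
  obtain ⟨δ1, hδ1, h1⟩ := hf ε hε
  refine ⟨min δ0 δ1, lt_min hδ0 hδ1, ?_⟩
  intro y hy hy1 hy2
  rw [← h0 y hy hy1 (lt_of_lt_of_le hy2 (min_le_left _ _))]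
  exact h1 y hy hy1 (lt_of_lt_of_le hy2 (min_le_right _ _))

/-- Leibniz rule for the `F^γ`-derivative: if `k` and `g` are `F^γ`-differentiable and
`F`-continuous at `z`, `z` is an accumulation point of `F`, and the staircase `S_F^γ` is
injective near `z` on `F`, then `D_F^γ(kg)(z) = (D_F^γ k)(z) g(z) + k(z) (D_F^γ g)(z)`. -/
theorem fractal_leibniz_rule (F : Set ℝ) (S k g : ℝ → ℝ) (z : ℝ) (hz : z ∈ F)
    (hacc : IsAccPt F z)
    (hinj : ∃ δ : ℝ, 0 < δ ∧ ∀ y ∈ F, 0 < |y - z| → |y - z| < δ → S y ≠ S z)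
    (Dk Dg : ℝ) (hk : HasFDeriv F S k z Dk) (hg : HasFDeriv F S g z Dg)
    (hkc : IsFLim F k z (k z)) (hgc : IsFLim F g z (g z)) :
    HasFDeriv F S (fun y => k y * g y) z (Dk * g z + k z * Dg) := by
  unfold HasFDeriv at *
  have h1 : IsFLim F (fun y => (k y - k z) / (S y - S z) * g y) z (Dk * g z) :=
    isFLim_mul hk hgc
  have h2 : IsFLim F (fun y => k z * ((g y - g z) / (S y - S z))) z (k z * Dg) := by
    have : IsFLim F (fun _ => k z) z (k z) := by
      intro ε hε
      exact ⟨1, one_pos, fun y _ _ _ => by simpa using hε⟩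
    exact isFLim_mul this hg
  have hsum := isFLim_add h1 h2
  apply isFLim_congr _ hsum
  obtain ⟨δ, hδ, hS⟩ := hinj
  refine ⟨δ, hδ, fun y hy hy1 hy2 => ?_⟩
  have hne : S y - S z ≠ 0 := sub_ne_zero.mpr (hS y hy hy1 hy2)
  field_simp
  ring
end

section
/- Chain rule through the staircase: if h : ℝ → ℝ is differentiable at S_F^γ(z) and k = h ∘ S_F^γ restricted to F, then k is F^γ-differentiable at z with D_F^γ k(z) = h'(S_F^γ(z)), provided z ∈ F is an accumulation point of F and S_F^γ is continuous and strictly increasing on F near z. -/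
/-- Chain rule through the staircase: if `h : ℝ → ℝ` is differentiable at `S_F^γ(z)` and
`S_F^γ` is continuous (within `F`) at `z` and strictly increasing on `F` near `z`, then
`k = h ∘ S_F^γ` is `F^γ`-differentiable at `z` with `D_F^γ k(z) = h'(S_F^γ(z))`. -/
theorem fractal_chain_rule (F : Set ℝ) (S : ℝ → ℝ) (h : ℝ → ℝ) (z : ℝ) (hz : z ∈ F)
    (hacc : IsAccPt F z) (L : ℝ) (hdiff : HasDerivAt h L (S z))
    (hcont : ContinuousWithinAt S F z)
    (hmono : ∃ δ : ℝ, 0 < δ ∧ StrictMonoOn S (F ∩ Metric.ball z δ)) :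
    HasFDeriv F S (fun y => h (S y)) z L := by
  obtain ⟨δ₀, hδ₀, hmono⟩ := hmono
  intro ε hε
  have hslope := hasDerivAt_iff_tendsto_slope.mp hdiff
  rw [Metric.tendsto_nhdsWithin_nhds] at hslope
  obtain ⟨η, hη, hη'⟩ := hslope ε hε
  rw [Metric.continuousWithinAt_iff] at hcont
  obtain ⟨δ₁, hδ₁, hδ₁'⟩ := hcont η hη
  refine ⟨min δ₀ δ₁, lt_min hδ₀ hδ₁, ?_⟩
  intro y hyF hy0 hyδ
  have hyz : y ≠ z := fun hE => by simp [hE] at hy0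
  have hball : y ∈ Metric.ball z δ₀ := by
    rw [Metric.mem_ball, Real.dist_eq]; exact hyδ.trans_le (min_le_left _ _)
  have hSne : S y ≠ S z := by
    intro he
    rcases hyz.lt_or_gt with hlt | hlt
    · exact absurd he (hmono ⟨hyF, hball⟩ ⟨hz, Metric.mem_ball_self hδ₀⟩ hlt).ne
    · exact absurd he.symm (hmono ⟨hz, Metric.mem_ball_self hδ₀⟩ ⟨hyF, hball⟩ hlt).ne
  have hd : dist (S y) (S z) < η := hδ₁' hyF (by rw [Real.dist_eq]; exact hyδ.trans_le (min_le_right _ _))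
  have hkey := hη' (Set.mem_compl_singleton_iff.mpr hSne) hd
  rw [slope_def_field, Real.dist_eq] at hkey
  simpa [div_eq_iff] using hkey
end
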